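/- arXiv:0909.1257 — 2 statements merged into one kernel-verified Lean document; each statement's English description precedes it below -/
import Mathlib

section
/- Universal re-encryption of a well-formed encrypted tag identifier is correct: if u = t · PK^x, v = g^x, y = PK^{x'}, z = g^{x'} for exponents x, x', then for all exponents a, a' the re-encrypted identifier ((u·y^a, v·z^a), (y^{a'}, z^{a'})) decrypts correctly, namely (u·y^a) · (((v·z^a))^sk)⁻¹ = t and y^{a'} · (((z^{a'}))^sk)⁻¹ = 1. -/
/-- Universal re-encryption of a well-formed encrypted tag identifier is correct:
the re-encrypted ciphertext decrypts to `t` and the new factor passes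
verification. -/
theorem universal_reencrypt_correct {G : Type*} [CommGroup G] (g : G) (sk : ℤ)
    (PK : G) (hPK : PK = g ^ sk) (t u v y z : G) (x x' : ℤ)
    (hu : u = t * PK ^ x) (hv : v = g ^ x) (hy : y = PK ^ x') (hz : z = g ^ x')
    (a a' : ℤ) :
    (u * y ^ a) * ((v * z ^ a) ^ sk)⁻¹ = t ∧
      y ^ a' * ((z ^ a') ^ sk)⁻¹ = 1 := by
  subst hPK hu hv hy hz
  constructor <;>
  · simp only [← zpow_mul, mul_zpow, ← zpow_add, mul_inv]
    group
end

section
/- Iterated universal re-encryption remains correct: starting from any well-formed encrypted tag identifier of t (a ciphertext (u, v) with u = t · v^sk together with a factor (y, z) with y = z^sk), and folding the re-encryption step ((u,v),(y,z)) ↦ ((u·y^a, v·z^a), (y^{a'}, z^{a'})) over an arbitrary finite list of exponent pairs (a, a'), the resulting encrypted identifier ((u', v'), (y', z')) still satisfies u' · ((v')^sk)⁻¹ = t and y' · ((z')^sk)⁻¹ = 1. -/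
/-- One step of universal re-encryption with exponents `(a, a')` replaces
`((u,v),(y,z))` by `((u*y^a, v*z^a), (y^{a'}, z^{a'}))`. -/
def reencStep {G : Type*} [CommGroup G] (s : (G × G) × (G × G)) (p : ℤ × ℤ) :
    (G × G) × (G × G) :=
  ((s.1.1 * s.2.1 ^ p.1, s.1.2 * s.2.2 ^ p.1), (s.2.1 ^ p.2, s.2.2 ^ p.2))

/-- Iterated universal re-encryption remains correct: starting from a well-formed
encrypted tag identifier of `t` and folding the re-encryption step over any list
of exponent pairs, the result still decrypts to `t` and its factor still passes
verification. -/
theorem iterated_reencrypt_correct {G : Type*} [CommGroup G] (sk : ℤ)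
    (t u v y z : G) (hu : u = t * v ^ sk) (hy : y = z ^ sk)
    (l : List (ℤ × ℤ)) :
    (l.foldl reencStep ((u, v), (y, z))).1.1 *
        (((l.foldl reencStep ((u, v), (y, z))).1.2) ^ sk)⁻¹ = t ∧
      (l.foldl reencStep ((u, v), (y, z))).2.1 *
        (((l.foldl reencStep ((u, v), (y, z))).2.2) ^ sk)⁻¹ = 1 := by
  induction l generalizing u v y z with
  | nil =>
    subst hu hy
    simp only [List.foldl_nil]
    constructor <;> group
  | cons p l ih =>
    simp only [List.foldl_cons, reencStep]
    exact ih _ _ _ _ (by subst hu hy; simp [mul_zpow, ← zpow_mul, mul_comm]; group)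
      (by subst hy; simp [← zpow_mul, mul_comm])
end
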